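/- Let N ≥ 1, r, s, c ∈ (0,1), α_s, α_r, α_c > 0, and set m = max{r, s, c}. Then there exists a constant C > 0 (depending only on N, r, s, c, α_s, α_r, α_c) such that for every λ > 0 and every φ ∈ L²(ℝ^N) with finite Gagliardo seminorm [φ]_{m,ℝ^N}, one has E_λ(φ) ≤ C ( λ^{2r−2m} [φ]_{m, B_{2/λ}(0)}² + [φ]_{r, {|x| > 1/λ}}² + (λ^{−N} + λ^{2r−2c−N}) ∫_{ℝ^N} (φ(y) − φ(0))² / |y|^{N+2c} dy ). -/

import Mathlib

/-!
The energy splits into an inner, an outer and a cross term. On `{|x| < 1/λ}` all distances are at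
most `2/λ`, so the order-`s` kernel is at most `(2/λ)^(2m-2s)` times the order-`m` kernel; the
outer term is already the order-`r` seminorm. In the cross term, points `y` with `|y| < 2/λ` are
within `3/λ` of `x` and are treated the same way. For `|y| ≥ 2/λ` we have `|x - y| ≥ |y|/2` and
`(φ y - φ x)² ≤ 2 (φ y - φ 0)² + 2 (φ x - φ 0)²`; both pieces are controlled by the weighted
integral at the origin, using `∫_{|y| ≥ R} |y|^(-N-2c) = R^(-2c) ∫_{|y| ≥ 1} |y|^(-N-2c)` (scaling)
and `∫_{|x| < ρ} (φ x - φ 0)² ≤ ρ^(N+2c) ∫ (φ x - φ 0)² / |x|^(N+2c)`.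
-/

open MeasureTheory ENNReal

/-- The squared Gagliardo seminorm `[φ]_{s,Ω}²` on a set `Ω ⊆ ℝ^N`. -/
noncomputable def gagliardoSq {N : ℕ} (s : ℝ) (Ω : Set (EuclideanSpace ℝ (Fin N)))
    (φ : EuclideanSpace ℝ (Fin N) → ℝ) : ℝ≥0∞ :=
  ∫⁻ x in Ω, ∫⁻ y in Ω, ENNReal.ofReal ((φ x - φ y) ^ 2 / ‖x - y‖ ^ ((N : ℝ) + 2 * s))

/-- The rescaled energy `E_λ` of the coupled nonlocal problem (ball of radius `1/λ` and its
complement). -/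
noncomputable def rescaledEnergy (N : ℕ) (r s c αs αr αc lam : ℝ)
    (φ : EuclideanSpace ℝ (Fin N) → ℝ) : ℝ≥0∞ :=
  ENNReal.ofReal (αs / 4 * lam ^ (2 * r - 2 * s)) *
      (∫⁻ x in {x : EuclideanSpace ℝ (Fin N) | ‖x‖ < 1 / lam},
        ∫⁻ y in {y : EuclideanSpace ℝ (Fin N) | ‖y‖ < 1 / lam},
          ENNReal.ofReal ((φ y - φ x) ^ 2 / ‖x - y‖ ^ ((N : ℝ) + 2 * s))) +
    ENNReal.ofReal (αr / 4) *
      (∫⁻ x in {x : EuclideanSpace ℝ (Fin N) | 1 / lam < ‖x‖},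
        ∫⁻ y in {y : EuclideanSpace ℝ (Fin N) | 1 / lam < ‖y‖},
          ENNReal.ofReal ((φ y - φ x) ^ 2 / ‖x - y‖ ^ ((N : ℝ) + 2 * r))) +
    ENNReal.ofReal (αc / 2 * lam ^ (2 * r - 2 * c)) *
      (∫⁻ x in {x : EuclideanSpace ℝ (Fin N) | ‖x‖ < 1 / lam},
        ∫⁻ y in {y : EuclideanSpace ℝ (Fin N) | 1 / lam < ‖y‖},
          ENNReal.ofReal ((φ y - φ x) ^ 2 / ‖x - y‖ ^ ((N : ℝ) + 2 * c)))

lemma div_rpow_le_rpow_sub_mul_div_rpow {A d R p q : ℝ} (hA : 0 ≤ A) (hd : 0 ≤ d) (hdR : d ≤ R)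
    (hp : 0 < p) (hpq : p ≤ q) : A / d ^ p ≤ R ^ (q - p) * (A / d ^ q) := by
  rcases hd.eq_or_lt with rfl | hd
  · simp [Real.zero_rpow hp.ne', Real.zero_rpow (hp.trans_le hpq).ne']
  calc A / d ^ p = d ^ (q - p) * (A / d ^ q) := by
        rw [Real.rpow_sub hd]; field_simp
    _ ≤ R ^ (q - p) * (A / d ^ q) := by gcongr

lemma sq_sub_div_norm_sub_rpow_le {E : Type*} [SeminormedAddCommGroup E] {x y : E}
    (a b e : ℝ) {p : ℝ} (hp : 0 ≤ p) (hy : 0 < ‖y‖) (hxy : 2 * ‖x‖ ≤ ‖y‖) :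
    (a - b) ^ 2 / ‖x - y‖ ^ p ≤
      2 ^ (p + 1) * ((a - e) ^ 2 * ‖y‖ ^ (-p) + (b - e) ^ 2 / ‖y‖ ^ p) := by
  have hfar : ‖y‖ / 2 ≤ ‖x - y‖ := by
    have := norm_sub_norm_le y x
    rw [norm_sub_rev y x] at this
    linarith
  have hsq : (a - b) ^ 2 ≤ 2 * (a - e) ^ 2 + 2 * (b - e) ^ 2 := by
    nlinarith [sq_nonneg (a + b - 2 * e)]
  have hypos : 0 < ‖y‖ ^ p := Real.rpow_pos_of_pos hy p
  calc (a - b) ^ 2 / ‖x - y‖ ^ p ≤ (a - b) ^ 2 / (‖y‖ / 2) ^ p := by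
        gcongr
    _ = 2 ^ p * ((a - b) ^ 2 / ‖y‖ ^ p) := by
        rw [Real.div_rpow hy.le zero_le_two]; field_simp
    _ ≤ 2 ^ p * ((2 * (a - e) ^ 2 + 2 * (b - e) ^ 2) / ‖y‖ ^ p) := by gcongr
    _ = _ := by
        rw [Real.rpow_add_one two_ne_zero, Real.rpow_neg hy.le]; field_simp

section HaarTail
variable {E : Type*} [NormedAddCommGroup E] [NormedSpace ℝ E] [FiniteDimensional ℝ E]
  [MeasurableSpace E] [BorelSpace E] (μ : Measure E) [μ.IsAddHaarMeasure]

lemma setLIntegral_le_norm_rpow_neg_eq (p : ℝ) {R : ℝ} (hR : 0 < R) :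
    ∫⁻ y in {y : E | R ≤ ‖y‖}, ENNReal.ofReal (‖y‖ ^ (-p)) ∂μ =
      ENNReal.ofReal (R ^ ((Module.finrank ℝ E : ℝ) - p)) *
        ∫⁻ y in {y : E | 1 ≤ ‖y‖}, ENNReal.ofReal (‖y‖ ^ (-p)) ∂μ := by
  set g : E → ℝ≥0∞ := {y : E | R ≤ ‖y‖}.indicator fun y => ENNReal.ofReal (‖y‖ ^ (-p))
  have hg : Measurable g := by
    refine Measurable.indicator (by fun_prop) ?_
    exact measurableSet_le measurable_const measurable_norm
  have hscale : ∫⁻ x, g (R • x) ∂μ = ENNReal.ofReal (R ^ Module.finrank ℝ E)⁻¹ * ∫⁻ y, g y ∂μ := by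
    rw [← lintegral_map hg (measurable_const_smul R), Measure.map_addHaar_smul μ hR.ne',
      lintegral_smul_measure, abs_of_pos (by positivity), smul_eq_mul]
  have hcomp : (fun x => g (R • x)) = fun x => ENNReal.ofReal (R ^ (-p)) *
      {y : E | 1 ≤ ‖y‖}.indicator (fun y => ENNReal.ofReal (‖y‖ ^ (-p))) x := by
    ext x
    simp only [g, Set.indicator, Set.mem_ofPred_eq, norm_smul, Real.norm_of_nonneg hR.le]
    by_cases hx : 1 ≤ ‖x‖
    · rw [if_pos (by nlinarith), if_pos hx, Real.mul_rpow hR.le (norm_nonneg _),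
        ENNReal.ofReal_mul (by positivity)]
    · rw [if_neg (by nlinarith), if_neg hx, mul_zero]
  rw [← lintegral_indicator (measurableSet_le measurable_const measurable_norm),
    ← lintegral_indicator (measurableSet_le measurable_const measurable_norm)]
  have hunscale : ∫⁻ y, g y ∂μ = ENNReal.ofReal (R ^ Module.finrank ℝ E) * ∫⁻ x, g (R • x) ∂μ := by
    rw [hscale, ← mul_assoc, ← ENNReal.ofReal_mul (by positivity),
      mul_inv_cancel₀ (by positivity), ENNReal.ofReal_one, one_mul]
  rw [hunscale, hcomp, lintegral_const_mul' _ _ ofReal_ne_top, ← mul_assoc,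
    ← ENNReal.ofReal_mul (by positivity), ← Real.rpow_natCast, ← Real.rpow_add hR,
    ← sub_eq_add_neg]

lemma setLIntegral_one_le_norm_rpow_neg_lt_top {p : ℝ} (hp : (Module.finrank ℝ E : ℝ) < p) :
    ∫⁻ y in {y : E | 1 ≤ ‖y‖}, ENNReal.ofReal (‖y‖ ^ (-p)) ∂μ < ∞ := by
  have hpoint : ∀ y ∈ {y : E | 1 ≤ ‖y‖},
      ENNReal.ofReal (‖y‖ ^ (-p)) ≤ ENNReal.ofReal (2 ^ p * (1 + ‖y‖) ^ (-p)) := by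
    intro y (hy : 1 ≤ ‖y‖)
    refine ENNReal.ofReal_le_ofReal ?_
    calc ‖y‖ ^ (-p) = 2 ^ p * (2 * ‖y‖) ^ (-p) := by
          rw [Real.mul_rpow zero_le_two (norm_nonneg _), ← mul_assoc, Real.rpow_neg zero_le_two,
            mul_inv_cancel₀ (by positivity), one_mul]
      _ ≤ 2 ^ p * (1 + ‖y‖) ^ (-p) := by
          have hp0 : 0 < p := (Nat.cast_nonneg _).trans_lt hp
          gcongr 2 ^ p * ?_
          exact Real.rpow_le_rpow_of_nonpos (by positivity) (by linarith) (by linarith)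
  calc ∫⁻ y in {y : E | 1 ≤ ‖y‖}, ENNReal.ofReal (‖y‖ ^ (-p)) ∂μ
      ≤ ∫⁻ y, ENNReal.ofReal (2 ^ p * (1 + ‖y‖) ^ (-p)) ∂μ :=
        (setLIntegral_mono' (measurableSet_le measurable_const measurable_norm) hpoint).trans
          (setLIntegral_le_lintegral _ _)
    _ = ENNReal.ofReal (2 ^ p) * ∫⁻ y, ENNReal.ofReal ((1 + ‖y‖) ^ (-p)) ∂μ := by
        rw [← lintegral_const_mul' _ _ ofReal_ne_top]
        simp_rw [← ENNReal.ofReal_mul (by positivity : (0:ℝ) ≤ 2 ^ p)]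
    _ < ∞ := ENNReal.mul_lt_top ofReal_lt_top (finite_integral_one_add_norm hp)
end HaarTail

lemma setOf_norm_lt_subset_ball_two_mul {E : Type*} [SeminormedAddCommGroup E] (ρ : ℝ) :
    {x : E | ‖x‖ < ρ} ⊆ Metric.ball 0 (2 * ρ) := fun x (hx : ‖x‖ < ρ) => by
  rw [mem_ball_zero_iff]
  linarith [norm_nonneg x]

lemma setLIntegral_norm_lt_sq_sub_le {E : Type*} [NormedAddCommGroup E] [MeasurableSpace E]
    [OpensMeasurableSpace E] (μ : Measure E) (f : E → ℝ) {p : ℝ} (hp : 0 ≤ p) (ρ : ℝ) :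
    ∫⁻ x in {x : E | ‖x‖ < ρ}, ENNReal.ofReal ((f x - f 0) ^ 2) ∂μ ≤
      ENNReal.ofReal (ρ ^ p) * ∫⁻ x, ENNReal.ofReal ((f x - f 0) ^ 2 / ‖x‖ ^ p) ∂μ := by
  have hpoint : ∀ x ∈ {x : E | ‖x‖ < ρ},
      ENNReal.ofReal ((f x - f 0) ^ 2) ≤ ENNReal.ofReal (ρ ^ p * ((f x - f 0) ^ 2 / ‖x‖ ^ p)) := by
    intro x (hx : ‖x‖ < ρ)
    refine ENNReal.ofReal_le_ofReal ?_
    rcases eq_or_ne x 0 with rfl | hx0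
    · simp
    have hxp : 0 < ‖x‖ ^ p := Real.rpow_pos_of_pos (norm_pos_iff.2 hx0) p
    calc (f x - f 0) ^ 2 = ‖x‖ ^ p * ((f x - f 0) ^ 2 / ‖x‖ ^ p) := by field_simp
      _ ≤ ρ ^ p * ((f x - f 0) ^ 2 / ‖x‖ ^ p) := by gcongr
  calc ∫⁻ x in {x : E | ‖x‖ < ρ}, ENNReal.ofReal ((f x - f 0) ^ 2) ∂μ
      ≤ ∫⁻ x in {x : E | ‖x‖ < ρ}, ENNReal.ofReal (ρ ^ p * ((f x - f 0) ^ 2 / ‖x‖ ^ p)) ∂μ :=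
        setLIntegral_mono' (measurableSet_lt measurable_norm measurable_const) hpoint
    _ ≤ ∫⁻ x, ENNReal.ofReal (ρ ^ p * ((f x - f 0) ^ 2 / ‖x‖ ^ p)) ∂μ :=
        setLIntegral_le_lintegral _ _
    _ = _ := by
        rw [← lintegral_const_mul' _ _ ofReal_ne_top]
        exact lintegral_congr fun x => ENNReal.ofReal_mul' (by positivity)

lemma setLIntegral_le_norm_sq_sub_div_le {E : Type*} [NormedAddCommGroup E] [MeasurableSpace E]
    [OpensMeasurableSpace E] (μ : Measure E) (f : E → ℝ) {x : E} {p R : ℝ} (hp : 0 ≤ p)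
    (hR : 0 < R) (hx : 2 * ‖x‖ ≤ R) :
    ∫⁻ y in {y : E | R ≤ ‖y‖}, ENNReal.ofReal ((f x - f y) ^ 2 / ‖x - y‖ ^ p) ∂μ ≤
      ENNReal.ofReal (2 ^ (p + 1)) *
        (ENNReal.ofReal ((f x - f 0) ^ 2) *
            ∫⁻ y in {y : E | R ≤ ‖y‖}, ENNReal.ofReal (‖y‖ ^ (-p)) ∂μ +
          ∫⁻ y, ENNReal.ofReal ((f y - f 0) ^ 2 / ‖y‖ ^ p) ∂μ) := by
  set A := {y : E | R ≤ ‖y‖}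
  have hA : MeasurableSet A := measurableSet_le measurable_const measurable_norm
  calc ∫⁻ y in A, ENNReal.ofReal ((f x - f y) ^ 2 / ‖x - y‖ ^ p) ∂μ
      ≤ ∫⁻ y in A, ENNReal.ofReal (2 ^ (p + 1)) *
          (ENNReal.ofReal ((f x - f 0) ^ 2) * ENNReal.ofReal (‖y‖ ^ (-p)) +
            ENNReal.ofReal ((f y - f 0) ^ 2 / ‖y‖ ^ p)) ∂μ := by
        refine setLIntegral_mono' hA fun y (hy : R ≤ ‖y‖) => ?_
        rw [← ENNReal.ofReal_mul (sq_nonneg _), ← ENNReal.ofReal_add (by positivity)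
          (by positivity), ← ENNReal.ofReal_mul (by positivity)]
        exact ENNReal.ofReal_le_ofReal
          (sq_sub_div_norm_sub_rpow_le _ _ _ hp (hR.trans_le hy) (hx.trans hy))
    _ = ENNReal.ofReal (2 ^ (p + 1)) *
          (ENNReal.ofReal ((f x - f 0) ^ 2) * ∫⁻ y in A, ENNReal.ofReal (‖y‖ ^ (-p)) ∂μ +
            ∫⁻ y in A, ENNReal.ofReal ((f y - f 0) ^ 2 / ‖y‖ ^ p) ∂μ) := by
        rw [lintegral_const_mul' _ _ ofReal_ne_top, lintegral_add_left (by fun_prop),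
          lintegral_const_mul' _ _ ofReal_ne_top]
    _ ≤ _ := by gcongr; exact Measure.restrict_le_self

/-- `gagliardoSq σ Ω φ` is by definition `gagliardoCross σ Ω Ω φ`. -/
noncomputable def gagliardoCross {N : ℕ} (σ : ℝ) (S T : Set (EuclideanSpace ℝ (Fin N)))
    (φ : EuclideanSpace ℝ (Fin N) → ℝ) : ℝ≥0∞ :=
  ∫⁻ x in S, ∫⁻ y in T, ENNReal.ofReal ((φ x - φ y) ^ 2 / ‖x - y‖ ^ ((N : ℝ) + 2 * σ))

section
variable {N : ℕ} {σ : ℝ} {S T : Set (EuclideanSpace ℝ (Fin N))} {φ : EuclideanSpace ℝ (Fin N) → ℝ}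

lemma gagliardoCross_mono {S' T' : Set (EuclideanSpace ℝ (Fin N))} (hS : S ⊆ S') (hT : T ⊆ T') :
    gagliardoCross σ S T φ ≤ gagliardoCross σ S' T' φ :=
  (lintegral_mono fun _ => lintegral_mono_set hT).trans (lintegral_mono_set hS)

lemma gagliardoCross_union_right_le (hφ : AEMeasurable φ) (T' : Set (EuclideanSpace ℝ (Fin N))) :
    gagliardoCross σ S (T ∪ T') φ ≤ gagliardoCross σ S T φ + gagliardoCross σ S T' φ := by
  have hkernel : AEMeasurable (fun z : EuclideanSpace ℝ (Fin N) × EuclideanSpace ℝ (Fin N) =>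
      ENNReal.ofReal ((φ z.1 - φ z.2) ^ 2 / ‖z.1 - z.2‖ ^ ((N : ℝ) + 2 * σ)))
      ((volume.restrict S).prod (volume.restrict T)) := by
    have h1 := hφ.restrict.comp_quasiMeasurePreserving
      (Measure.quasiMeasurePreserving_fst (μ := volume.restrict S) (ν := volume.restrict T))
    have h2 := hφ.restrict.comp_quasiMeasurePreserving
      (Measure.quasiMeasurePreserving_snd (μ := volume.restrict S) (ν := volume.restrict T))
    exact ENNReal.measurable_ofReal.comp_aemeasurable
      (((h1.sub h2).pow_const 2).div (by fun_prop : Measurable fun z :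
        EuclideanSpace ℝ (Fin N) × EuclideanSpace ℝ (Fin N) =>
          ‖z.1 - z.2‖ ^ ((N : ℝ) + 2 * σ)).aemeasurable)
  exact (lintegral_mono fun x => lintegral_union_le _ _ _).trans_eq
    (lintegral_add_left' hkernel.lintegral_prod_right' _)

lemma gagliardoCross_le_of_norm_sub_le {τ R : ℝ} (hσ : 0 < σ) (hστ : σ ≤ τ)
    (hS : MeasurableSet S) (hT : MeasurableSet T) (hST : ∀ x ∈ S, ∀ y ∈ T, ‖x - y‖ ≤ R) :
    gagliardoCross σ S T φ ≤ ENNReal.ofReal (R ^ (2 * τ - 2 * σ)) * gagliardoCross τ S T φ := by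
  rw [gagliardoCross, gagliardoCross, ← lintegral_const_mul' _ _ ofReal_ne_top]
  refine setLIntegral_mono' hS fun x hx => ?_
  rw [← lintegral_const_mul' _ _ ofReal_ne_top]
  refine setLIntegral_mono' hT fun y hy => ?_
  have hR : 0 ≤ R := (norm_nonneg _).trans (hST x hx y hy)
  rw [← ENNReal.ofReal_mul (by positivity)]
  refine ENNReal.ofReal_le_ofReal ?_
  convert div_rpow_le_rpow_sub_mul_div_rpow (sq_nonneg (φ x - φ y)) (norm_nonneg _)
    (hST x hx y hy) (by positivity : 0 < (N : ℝ) + 2 * σ)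
    (by linarith : (N : ℝ) + 2 * σ ≤ N + 2 * τ) using 3
  ring

end

lemma gagliardoCross_norm_lt_le_norm_le {N : ℕ} {c ρ : ℝ} (hc : 0 ≤ c) (hρ : 0 < ρ)
    (hJ : ∫⁻ y in {y : EuclideanSpace ℝ (Fin N) | 2 * ρ ≤ ‖y‖},
      ENNReal.ofReal (‖y‖ ^ (-((N : ℝ) + 2 * c))) ≠ ∞)
    (φ : EuclideanSpace ℝ (Fin N) → ℝ) :
    gagliardoCross c {x | ‖x‖ < ρ} {y | 2 * ρ ≤ ‖y‖} φ ≤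
      ENNReal.ofReal (2 ^ ((N : ℝ) + 2 * c + 1)) *
        (ENNReal.ofReal (ρ ^ ((N : ℝ) + 2 * c)) *
            (∫⁻ y, ENNReal.ofReal ((φ y - φ 0) ^ 2 / ‖y‖ ^ ((N : ℝ) + 2 * c))) *
            (∫⁻ y in {y : EuclideanSpace ℝ (Fin N) | 2 * ρ ≤ ‖y‖},
              ENNReal.ofReal (‖y‖ ^ (-((N : ℝ) + 2 * c)))) +
          (∫⁻ y, ENNReal.ofReal ((φ y - φ 0) ^ 2 / ‖y‖ ^ ((N : ℝ) + 2 * c))) *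
            volume {x : EuclideanSpace ℝ (Fin N) | ‖x‖ < ρ}) := by
  set p : ℝ := N + 2 * c
  set X := {x : EuclideanSpace ℝ (Fin N) | ‖x‖ < ρ}
  set J := ∫⁻ y in {y : EuclideanSpace ℝ (Fin N) | 2 * ρ ≤ ‖y‖}, ENNReal.ofReal (‖y‖ ^ (-p))
  set I := ∫⁻ y, ENNReal.ofReal ((φ y - φ 0) ^ 2 / ‖y‖ ^ p)
  calc gagliardoCross c X {y | 2 * ρ ≤ ‖y‖} φ
      ≤ ∫⁻ x in X, ENNReal.ofReal (2 ^ (p + 1)) * (ENNReal.ofReal ((φ x - φ 0) ^ 2) * J + I) := by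
        refine setLIntegral_mono' (measurableSet_lt measurable_norm measurable_const) fun x hx => ?_
        exact setLIntegral_le_norm_sq_sub_div_le volume φ (by positivity) (by positivity)
          (by linarith [show ‖x‖ < ρ from hx])
    _ = ENNReal.ofReal (2 ^ (p + 1)) *
          ((∫⁻ x in X, ENNReal.ofReal ((φ x - φ 0) ^ 2)) * J + I * volume X) := by
        rw [lintegral_const_mul' _ _ ofReal_ne_top, lintegral_add_right _ measurable_const,
          lintegral_mul_const' _ _ hJ, setLIntegral_const]
    _ ≤ _ := by
        gcongr
        exact setLIntegral_norm_lt_sq_sub_le volume φ (by positivity : 0 ≤ p) ρ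

lemma exists_gagliardoCross_norm_lt_le_norm_le (N : ℕ) {c : ℝ} (hc : 0 < c) :
    ∃ K : ℝ, 0 ≤ K ∧ ∀ ρ : ℝ, 0 < ρ → ∀ φ : EuclideanSpace ℝ (Fin N) → ℝ,
      gagliardoCross c {x | ‖x‖ < ρ} {y | 2 * ρ ≤ ‖y‖} φ ≤
        ENNReal.ofReal (K * ρ ^ (N : ℝ)) *
          ∫⁻ y, ENNReal.ofReal ((φ y - φ 0) ^ 2 / ‖y‖ ^ ((N : ℝ) + 2 * c)) := by
  set p : ℝ := N + 2 * c with hp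
  set J₁ := ∫⁻ y in {y : EuclideanSpace ℝ (Fin N) | 1 ≤ ‖y‖}, ENNReal.ofReal (‖y‖ ^ (-p))
  have hJ₁ : J₁ ≠ ∞ := (setLIntegral_one_le_norm_rpow_neg_lt_top volume
    (by simp [p, hc] : (Module.finrank ℝ (EuclideanSpace ℝ (Fin N)) : ℝ) < p)).ne
  set V := volume.real (Metric.ball (0 : EuclideanSpace ℝ (Fin N)) 1)
  refine ⟨2 ^ (p + 1) * (2 ^ (-(2 * c)) * J₁.toReal + V), by positivity, fun ρ hρ φ => ?_⟩
  have htail : ∫⁻ y in {y : EuclideanSpace ℝ (Fin N) | 2 * ρ ≤ ‖y‖}, ENNReal.ofReal (‖y‖ ^ (-p)) =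
      ENNReal.ofReal ((2 * ρ) ^ (-(2 * c)) * J₁.toReal) := by
    rw [setLIntegral_le_norm_rpow_neg_eq volume p (by positivity), finrank_euclideanSpace_fin,
      ENNReal.ofReal_mul (by positivity), ENNReal.ofReal_toReal hJ₁]
    congr 3
    ring
  have hvol : volume {x : EuclideanSpace ℝ (Fin N) | ‖x‖ < ρ} =
      ENNReal.ofReal (ρ ^ (N : ℝ) * V) := by
    rw [show {x : EuclideanSpace ℝ (Fin N) | ‖x‖ < ρ} = Metric.ball 0 ρ by ext; simp,
      Measure.addHaar_ball_of_pos volume 0 hρ, finrank_euclideanSpace_fin, Real.rpow_natCast,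
      ENNReal.ofReal_mul (by positivity), ofReal_measureReal]
  have hcancel : ρ ^ (2 * c) * ρ ^ (-(2 * c)) = 1 := by
    rw [← Real.rpow_add hρ, add_neg_cancel, Real.rpow_zero]
  refine (gagliardoCross_norm_lt_le_norm_le hc.le hρ (htail ▸ ofReal_ne_top) φ).trans_eq ?_
  rw [← hp, htail, hvol]
  set I := ∫⁻ y, ENNReal.ofReal ((φ y - φ 0) ^ 2 / ‖y‖ ^ p)
  calc _ = ENNReal.ofReal (2 ^ (p + 1) *
        (ρ ^ p * ((2 * ρ) ^ (-(2 * c)) * J₁.toReal) + ρ ^ (N : ℝ) * V)) * I := by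
        conv_rhs => rw [ENNReal.ofReal_mul (by positivity),
          ENNReal.ofReal_add (by positivity) (by positivity), ENNReal.ofReal_mul (by positivity)]
        ring
    _ = _ := by
        rw [Real.mul_rpow zero_le_two hρ.le, Real.rpow_add hρ]
        congr 2
        linear_combination (2 ^ (p + 1) * ρ ^ (N : ℝ) * 2 ^ (-(2 * c)) * J₁.toReal) * hcancel

section
variable {N : ℕ} {φ : EuclideanSpace ℝ (Fin N) → ℝ}

lemma gagliardoSq_norm_lt_le {s m : ℝ} (hs : 0 < s) (hsm : s ≤ m) (ρ : ℝ) :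
    gagliardoSq s {x | ‖x‖ < ρ} φ ≤
      ENNReal.ofReal ((2 * ρ) ^ (2 * m - 2 * s)) * gagliardoSq m (Metric.ball 0 (2 * ρ)) φ := by
  have hX : MeasurableSet {x : EuclideanSpace ℝ (Fin N) | ‖x‖ < ρ} :=
    measurableSet_lt measurable_norm measurable_const
  have hXB := setOf_norm_lt_subset_ball_two_mul (E := EuclideanSpace ℝ (Fin N)) ρ
  refine (gagliardoCross_le_of_norm_sub_le hs hsm hX hX fun x hx y hy => ?_).trans
    (by gcongr; exact gagliardoCross_mono hXB hXB)
  have : ‖x‖ < ρ := hx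
  have : ‖y‖ < ρ := hy
  linarith [norm_sub_le x y]

lemma exists_gagliardoCross_norm_lt_lt_norm_le (N : ℕ) {c m : ℝ} (hc : 0 < c) (hcm : c ≤ m) :
    ∃ K : ℝ, 0 ≤ K ∧ ∀ ρ : ℝ, 0 < ρ → ∀ φ : EuclideanSpace ℝ (Fin N) → ℝ, AEMeasurable φ →
      gagliardoCross c {x | ‖x‖ < ρ} {y | ρ < ‖y‖} φ ≤
        ENNReal.ofReal ((3 * ρ) ^ (2 * m - 2 * c)) * gagliardoSq m (Metric.ball 0 (2 * ρ)) φ +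
          ENNReal.ofReal (K * ρ ^ (N : ℝ)) *
            ∫⁻ y, ENNReal.ofReal ((φ y - φ 0) ^ 2 / ‖y‖ ^ ((N : ℝ) + 2 * c)) := by
  obtain ⟨K, hK, hfar⟩ := exists_gagliardoCross_norm_lt_le_norm_le N hc
  refine ⟨K, hK, fun ρ hρ φ hφ => ?_⟩
  have hX : MeasurableSet {x : EuclideanSpace ℝ (Fin N) | ‖x‖ < ρ} :=
    measurableSet_lt measurable_norm measurable_const
  have hXB := setOf_norm_lt_subset_ball_two_mul (E := EuclideanSpace ℝ (Fin N)) ρ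
  have hnear : gagliardoCross c {x | ‖x‖ < ρ} (Metric.ball 0 (2 * ρ)) φ ≤
      ENNReal.ofReal ((3 * ρ) ^ (2 * m - 2 * c)) * gagliardoSq m (Metric.ball 0 (2 * ρ)) φ := by
    refine (gagliardoCross_le_of_norm_sub_le hc hcm hX measurableSet_ball fun x hx y hy => ?_).trans
      (by gcongr; exact gagliardoCross_mono hXB subset_rfl)
    have : ‖x‖ < ρ := hx
    have : ‖y‖ < 2 * ρ := mem_ball_zero_iff.1 hy
    linarith [norm_sub_le x y]
  have hsplit : {y : EuclideanSpace ℝ (Fin N) | ρ < ‖y‖} ⊆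
      Metric.ball 0 (2 * ρ) ∪ {y | 2 * ρ ≤ ‖y‖} := fun y _ => by
    rw [Set.mem_union, mem_ball_zero_iff]
    exact lt_or_ge _ _
  calc gagliardoCross c {x | ‖x‖ < ρ} {y | ρ < ‖y‖} φ
      ≤ gagliardoCross c {x | ‖x‖ < ρ} (Metric.ball 0 (2 * ρ) ∪ {y | 2 * ρ ≤ ‖y‖}) φ :=
        gagliardoCross_mono subset_rfl hsplit
    _ ≤ _ := gagliardoCross_union_right_le hφ _
    _ ≤ _ := add_le_add hnear (hfar ρ hρ φ)

end

lemma rescaledEnergy_eq (N : ℕ) (r s c αs αr αc lam : ℝ) (φ : EuclideanSpace ℝ (Fin N) → ℝ) :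
    rescaledEnergy N r s c αs αr αc lam φ =
      ENNReal.ofReal (αs / 4 * lam ^ (2 * r - 2 * s)) * gagliardoSq s {x | ‖x‖ < 1 / lam} φ +
        ENNReal.ofReal (αr / 4) * gagliardoSq r {x | 1 / lam < ‖x‖} φ +
        ENNReal.ofReal (αc / 2 * lam ^ (2 * r - 2 * c)) *
          gagliardoCross c {x | ‖x‖ < 1 / lam} {y | 1 / lam < ‖y‖} φ := by
  simp only [rescaledEnergy, gagliardoSq, gagliardoCross, sub_sq_comm (φ _) (φ _)]

lemma ofReal_mul_rpow_mul_ofReal_mul_one_div_rpow {a k lam e b : ℝ} (ha : 0 ≤ a) (hk : 0 ≤ k)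
    (hlam : 0 < lam) (G : ℝ≥0∞) :
    ENNReal.ofReal (a * lam ^ e) * (ENNReal.ofReal (k * (1 / lam) ^ b) * G) =
      ENNReal.ofReal (a * k) * (ENNReal.ofReal (lam ^ (e - b)) * G) := by
  rw [← mul_assoc, ← mul_assoc, ← ENNReal.ofReal_mul (by positivity),
    ← ENNReal.ofReal_mul (by positivity), one_div, Real.inv_rpow hlam.le, ← Real.rpow_neg hlam.le,
    Real.rpow_sub hlam, Real.rpow_neg hlam.le]
  ring_nf

section
variable {N : ℕ} {r m a lam : ℝ}

lemma rescaled_gagliardoSq_le {s : ℝ} (ha : 0 ≤ a) (hs : 0 < s) (hsm : s ≤ m) (hlam : 0 < lam)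
    (φ : EuclideanSpace ℝ (Fin N) → ℝ) :
    ENNReal.ofReal (a * lam ^ (2 * r - 2 * s)) * gagliardoSq s {x | ‖x‖ < 1 / lam} φ ≤
      ENNReal.ofReal (a * 2 ^ (2 * m - 2 * s)) *
        (ENNReal.ofReal (lam ^ (2 * r - 2 * m)) * gagliardoSq m (Metric.ball 0 (2 / lam)) φ) := by
  have h := gagliardoSq_norm_lt_le (φ := φ) hs hsm (1 / lam)
  rw [Real.mul_rpow zero_le_two (by positivity), show 2 * (1 / lam) = 2 / lam by ring] at h
  calc _ ≤ _ := mul_le_mul_right h _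
    _ = _ := by
      rw [ofReal_mul_rpow_mul_ofReal_mul_one_div_rpow ha (by positivity) hlam,
        sub_sub_sub_cancel_right]

lemma exists_rescaled_gagliardoCross_le (N : ℕ) {c : ℝ} (hc : 0 < c) (hcm : c ≤ m) :
    ∃ K : ℝ, 0 ≤ K ∧ ∀ a : ℝ, 0 ≤ a → ∀ lam : ℝ, 0 < lam →
      ∀ φ : EuclideanSpace ℝ (Fin N) → ℝ, AEMeasurable φ →
        ENNReal.ofReal (a * lam ^ (2 * r - 2 * c)) *
            gagliardoCross c {x | ‖x‖ < 1 / lam} {y | 1 / lam < ‖y‖} φ ≤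
          ENNReal.ofReal (a * 3 ^ (2 * m - 2 * c)) *
              (ENNReal.ofReal (lam ^ (2 * r - 2 * m)) * gagliardoSq m (Metric.ball 0 (2 / lam)) φ) +
            ENNReal.ofReal (a * K) *
              (ENNReal.ofReal (lam ^ (-(N : ℝ)) + lam ^ (2 * r - 2 * c - (N : ℝ))) *
                ∫⁻ y, ENNReal.ofReal ((φ y - φ 0) ^ 2 / ‖y‖ ^ ((N : ℝ) + 2 * c))) := by
  obtain ⟨K, hK, hcross⟩ := exists_gagliardoCross_norm_lt_lt_norm_le N hc hcm
  refine ⟨K, hK, fun a ha lam hlam φ hφ => ?_⟩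
  have h := hcross (1 / lam) (by positivity) φ hφ
  rw [Real.mul_rpow (by norm_num) (by positivity), show 2 * (1 / lam) = 2 / lam by ring] at h
  calc _ ≤ _ := mul_le_mul_right h _
    _ = _ := by
      rw [mul_add, ofReal_mul_rpow_mul_ofReal_mul_one_div_rpow ha (by positivity) hlam,
        ofReal_mul_rpow_mul_ofReal_mul_one_div_rpow ha hK hlam, sub_sub_sub_cancel_right]
    _ ≤ _ := by
      gcongr
      exact le_add_of_nonneg_left (by positivity)

end

lemma ofReal_mul_add_ofReal_mul_add_le {a b c d : ℝ} (ha : 0 ≤ a) (hb : 0 ≤ b) (hc : 0 ≤ c)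
    (hd : 0 ≤ d) {x y z : ℝ≥0∞} :
    ENNReal.ofReal a * x + ENNReal.ofReal b * y + (ENNReal.ofReal c * x + ENNReal.ofReal d * z) ≤
      ENNReal.ofReal (a + c + b + d) * (x + y + z) := by
  rw [ENNReal.ofReal_add (by positivity) hd, ENNReal.ofReal_add (by positivity) hb,
    ENNReal.ofReal_add ha hc]
  set S := ENNReal.ofReal a + ENNReal.ofReal c + ENNReal.ofReal b + ENNReal.ofReal d
  calc _ = (ENNReal.ofReal a + ENNReal.ofReal c) * x + ENNReal.ofReal b * y +
        ENNReal.ofReal d * z := by ring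
    _ ≤ S * x + S * y + S * z := by
      gcongr ?_ * x + ?_ * y + ?_ * z
      · exact le_self_add.trans le_self_add
      · exact le_add_self.trans le_self_add
      · exact le_add_self
    _ = _ := by ring

theorem rescaled_energy_upper_bound_general (N : ℕ) (r s c : ℝ)
    (hs : s ∈ Set.Ioo (0 : ℝ) 1) (hc : c ∈ Set.Ioo (0 : ℝ) 1)
    (αs αr αc : ℝ) (hαs : 0 < αs) (hαr : 0 < αr) (hαc : 0 < αc) :
    ∃ C : ℝ, 0 < C ∧ ∀ lam : ℝ, 0 < lam →
      ∀ φ : EuclideanSpace ℝ (Fin N) → ℝ, MemLp φ 2 volume →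
      gagliardoSq (max r (max s c)) Set.univ φ ≠ ⊤ →
      rescaledEnergy N r s c αs αr αc lam φ ≤
        ENNReal.ofReal C *
          (ENNReal.ofReal (lam ^ (2 * r - 2 * max r (max s c))) *
              gagliardoSq (max r (max s c)) (Metric.ball 0 (2 / lam)) φ +
            gagliardoSq r {x : EuclideanSpace ℝ (Fin N) | 1 / lam < ‖x‖} φ +
            ENNReal.ofReal (lam ^ (-(N : ℝ)) + lam ^ (2 * r - 2 * c - (N : ℝ))) *
              ∫⁻ y, ENNReal.ofReal ((φ y - φ 0) ^ 2 / ‖y‖ ^ ((N : ℝ) + 2 * c))) := by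
  set m := max r (max s c)
  obtain ⟨K, hK, hcross⟩ := exists_rescaled_gagliardoCross_le (r := r) N hc.1
    ((le_max_right s c).trans (le_max_right r _) : c ≤ m)
  have hsm : s ≤ m := (le_max_left s c).trans (le_max_right r _)
  refine ⟨αs / 4 * 2 ^ (2 * m - 2 * s) + αc / 2 * 3 ^ (2 * m - 2 * c) + αr / 4 + αc / 2 * K,
    by positivity, fun lam hlam φ hφ _ => ?_⟩
  rw [rescaledEnergy_eq]
  exact (add_le_add (add_le_add (rescaled_gagliardoSq_le (by positivity) hs.1 hsm hlam φ) le_rfl)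
    (hcross _ (by positivity) lam hlam φ hφ.aestronglyMeasurable.aemeasurable)).trans
    (ofReal_mul_add_ofReal_mul_add_le (by positivity) (by positivity) (by positivity)
      (by positivity))

/-- Upper bound for the rescaled energy `E_λ` in terms of Gagliardo seminorms of maximal
order `m = max{r,s,c}` and a weighted integral centered at the origin. -/
theorem rescaled_energy_upper_bound (N : ℕ) (hN : 1 ≤ N) (r s c : ℝ)
    (hr : r ∈ Set.Ioo (0 : ℝ) 1) (hs : s ∈ Set.Ioo (0 : ℝ) 1) (hc : c ∈ Set.Ioo (0 : ℝ) 1)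
    (αs αr αc : ℝ) (hαs : 0 < αs) (hαr : 0 < αr) (hαc : 0 < αc) :
    ∃ C : ℝ, 0 < C ∧ ∀ lam : ℝ, 0 < lam →
      ∀ φ : EuclideanSpace ℝ (Fin N) → ℝ, MemLp φ 2 volume →
      gagliardoSq (max r (max s c)) Set.univ φ ≠ ⊤ →
      rescaledEnergy N r s c αs αr αc lam φ ≤
        ENNReal.ofReal C *
          (ENNReal.ofReal (lam ^ (2 * r - 2 * max r (max s c))) *
              gagliardoSq (max r (max s c)) (Metric.ball 0 (2 / lam)) φ +
            gagliardoSq r {x : EuclideanSpace ℝ (Fin N) | 1 / lam < ‖x‖} φ +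
            ENNReal.ofReal (lam ^ (-(N : ℝ)) + lam ^ (2 * r - 2 * c - (N : ℝ))) *
              ∫⁻ y, ENNReal.ofReal ((φ y - φ 0) ^ 2 / ‖y‖ ^ ((N : ℝ) + 2 * c))) :=
  rescaled_energy_upper_bound_general N r s c hs hc αs αr αc hαs hαr hαc
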